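/- arXiv:2403.02555 — 2 statements merged into one kernel-verified Lean document; each statement's English description precedes it below -/
import Mathlib

section
/- Let p be a prime number, R a commutative ring, and φ : R → R a Frobenius lift, i.e. a ring homomorphism with φ(x) ≡ x^p (mod p·R) for every x ∈ R. Let r ≥ 1 and let x ∈ R satisfy φ(x) = x. If the image of x in R/p^r·R is a unit, then x^(p^(r-1)·(p-1)) ≡ 1 (mod p^r·R). -/
/-- If `φ : R → R` is a Frobenius lift for a prime `p`,
`φ x = x`, and the image of `x` in `R/p^r R` is a unit, then
`x ^ (p^(r-1)·(p-1)) ≡ 1 (mod p^r·R)` for `r ≥ 1`. -/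
theorem frob_fixed_unit_root_of_unity
    (p : ℕ) (hp : p.Prime) (R : Type*) [CommRing R] (φ : R →+* R)
    (hφ : ∀ y : R, φ y - y ^ p ∈ Ideal.span ({(p : R)} : Set R))
    (r : ℕ) (hr : 1 ≤ r) (x : R) (hx : φ x = x)
    (hu : IsUnit (Ideal.Quotient.mk (Ideal.span ({(p : R) ^ r} : Set R)) x)) :
    x ^ (p ^ (r - 1) * (p - 1)) - 1 ∈ Ideal.span ({(p : R) ^ r} : Set R) := by
  set I := Ideal.span ({(p : R) ^ r} : Set R)
  have hdvd : (p : R) ∣ x - x ^ p := by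
    have := hφ x
    rw [hx, Ideal.mem_span_singleton] at this
    exact this
  have h1 : (p : R) ^ r ∣ x ^ p ^ (r - 1) - (x ^ p) ^ p ^ (r - 1) := by
    have := dvd_sub_pow_of_dvd_sub hdvd (r - 1)
    rwa [Nat.sub_add_cancel hr] at this
  -- pass to quotient
  set q := Ideal.Quotient.mk I
  have hq : q (x ^ p ^ (r - 1)) = q ((x ^ p) ^ p ^ (r - 1)) := by
    rw [Ideal.Quotient.mk_eq_mk_iff_sub_mem, Ideal.mem_span_singleton]
    exact h1
  have hpow : (x ^ p) ^ p ^ (r - 1) = x ^ p ^ (r - 1) * x ^ (p ^ (r - 1) * (p - 1)) := by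
    rw [← pow_mul, ← pow_add]
    congr 1
    have hp1 : 1 ≤ p := hp.one_lt.le
    have : p ^ (r - 1) * p = p ^ (r - 1) * 1 + p ^ (r - 1) * (p - 1) := by
      rw [← Nat.mul_add, Nat.add_sub_cancel' hp1]
    rw [Nat.mul_comm p (p ^ (r-1)), this, Nat.mul_one]
  have hux : IsUnit (q (x ^ p ^ (r - 1))) := by
    rw [map_pow]; exact hu.pow _
  have : q (x ^ p ^ (r - 1)) * 1 = q (x ^ p ^ (r - 1)) * q (x ^ (p ^ (r - 1) * (p - 1))) := by
    conv_lhs => rw [mul_one, hq, hpow, map_mul]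
  have h2 : q (x ^ (p ^ (r - 1) * (p - 1))) = 1 := (hux.mul_left_cancel this).symm
  have := Ideal.Quotient.eq.mp (h2.trans (map_one q).symm)
  rwa [Ideal.mem_span_singleton] at this ⊢
end

section
/- Let p be a prime number, A an integral domain, and t ∈ A a nonzero element such that the image of p in A does not lie in the principal ideal (t). Then for every x ∈ A, the equation (1 + t·x)^p = (1 + t)^p holds if and only if x = 1. -/
/-- Let `p` be prime, `A` an integral domain, `t ≠ 0` with
`p ∉ (t)`. Then for every `x ∈ A`, `(1 + t·x)^p = (1 + t)^p ↔ x = 1`. -/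
theorem unique_pth_root_of_unity_section
    (p : ℕ) (hp : p.Prime) (A : Type*) [CommRing A] [IsDomain A]
    (t : A) (ht : t ≠ 0) (hpt : (p : A) ∉ Ideal.span ({t} : Set A))
    (x : A) :
    (1 + t * x) ^ p = (1 + t) ^ p ↔ x = 1 := by
  constructor
  · intro h
    have hgeom := geom_sum₂_mul (1 + t * x) (1 + t) p
    have hab : (1 + t * x) - (1 + t) = t * (x - 1) := by ring
    rw [hab, h, sub_self] at hgeom
    rcases mul_eq_zero.mp hgeom with hs | h0
    · exfalso
      apply hpt
      rw [← Ideal.Quotient.eq_zero_iff_mem]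
      have ht0 : (Ideal.Quotient.mk (Ideal.span ({t} : Set A))) t = 0 := by
        rw [Ideal.Quotient.eq_zero_iff_mem]
        exact Ideal.subset_span rfl
      have := congrArg (Ideal.Quotient.mk (Ideal.span ({t} : Set A))) hs
      simpa [ht0] using this
    · rcases mul_eq_zero.mp h0 with h1 | h2
      · exact absurd h1 ht
      · linear_combination h2
  · rintro rfl; ring
end
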